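/- arXiv:math/0202281 — 2 statements merged into one kernel-verified Lean document; each statement's English description precedes it below -/
import Mathlib

section
/- Let n ≥ 1 and let a, b be integers coprime to n. The linear Alexander quandles Λ_n/(t−a) and Λ_n/(t−b) are isomorphic as quandles if and only if N(n,a) = N(n,b) and a ≡ b (mod N(n,a)), where N(n,c) := n/gcd(n, 1−c). -/
/-!
Normalise a quandle isomorphism `f : (ZMod n)_A → (ZMod n)_B` by `f 0 = 0`. Expanding one quandle
product in two ways shows that `x ↦ (1 - B) * f x` is additive, so `(1 - B) * f x = x * c` with
`c = (1 - B) * f 1`; by surjectivity of `f`, `c` and `1 - B` divide each other. Since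
`f ((1 - A) * y) = y * c` and `f` is injective, `1 - A` and `c`, hence `1 - B`, have the same
additive order, and `f ((1 - A) * (A - B)) = (A - B) * c = 0` gives `(A - B) * (1 - A) = 0`.

Conversely, over any commutative ring, if `1 - A` and `1 - B` divide each other, say
`1 - B = (1 - A) * β`, and `A - B` annihilates `1 - A`, then fixing representatives of the cosets
of `(1 - A)` and multiplying by `β` inside each coset is an isomorphism. In `ZMod n` the additive
order of `c` is `n / gcd(n, c)`, and elements of equal additive order divide each other.
-/

variable {R : Type*} [CommRing R]

def IsAlexanderHom (A B : R) (f : R → R) : Prop :=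
  ∀ x y, f (A * x + (1 - A) * y) = B * f x + (1 - B) * f y

namespace IsAlexanderHom

variable {A B : R} {f : R → R}

theorem sub_map_zero (hf : IsAlexanderHom A B f) : IsAlexanderHom A B (fun x => f x - f 0) :=
  fun x y => by linear_combination hf x y

theorem one_sub_mul_map_add (hf : IsAlexanderHom A B f) (hB : IsUnit B) (h0 : f 0 = 0)
    (x y : R) : (1 - B) * f (x + y) = (1 - B) * f x + (1 - B) * f y := by
  -- `A * y + (1 - A) * x` is also the product of `A * y` and `x + A * y`.
  have e1 := hf (A * y) (x + A * y)
  have e2 := hf y x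
  have e3 := hf (x + y) x
  have e4 := hf y 0
  rw [show A * (A * y) + (1 - A) * (x + A * y) = A * y + (1 - A) * x by ring] at e1
  rw [show A * (x + y) + (1 - A) * x = x + A * y by ring] at e3
  rw [mul_zero, add_zero, h0, mul_zero, add_zero] at e4
  refine hB.mul_left_cancel ?_
  linear_combination e2 - e1 - (1 - B) * e3 - B * e4

end IsAlexanderHom

theorem exists_bijective_isAlexanderHom {A B : R} (hAB : 1 - A ∣ 1 - B) (hBA : 1 - B ∣ 1 - A)
    (h : (A - B) * (1 - A) = 0) :
    ∃ f : R → R, Function.Bijective f ∧ IsAlexanderHom A B f := by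
  obtain ⟨β, hβ⟩ := hAB
  obtain ⟨γ, hγ⟩ := hBA
  set I := Ideal.span {1 - A}
  have mem_I {t : R} : t ∈ I ↔ ∃ p, (1 - A) * p = t := by
    simp only [I, Ideal.mem_span_singleton', mul_comm]
  let ρ : R → R := fun x => Function.surjInv Ideal.Quotient.mk_surjective (Ideal.Quotient.mk I x)
  have sub_ρ_mem (x : R) : x - ρ x ∈ I :=
    Ideal.Quotient.eq.mp (Function.surjInv_eq Ideal.Quotient.mk_surjective _).symm
  have ρ_eq {x y : R} (hxy : x - y ∈ I) : ρ x = ρ y := by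
    simp only [ρ, Ideal.Quotient.eq.mpr hxy]
  have βγ_mul {t : R} (ht : t ∈ I) : β * γ * t = t := by
    obtain ⟨p, rfl⟩ := mem_I.mp ht
    linear_combination (-p) * hγ - γ * p * hβ
  refine ⟨fun x => ρ x + β * (x - ρ x), ⟨fun x y hxy => ?_, fun z => ?_⟩, fun x y => ?_⟩
  · simp only at hxy
    have hmem : x - y ∈ I := by
      rw [show x - y = (β - 1) * (y - ρ y) - (β - 1) * (x - ρ x) by linear_combination hxy]
      exact I.sub_mem (I.mul_mem_left _ (sub_ρ_mem y)) (I.mul_mem_left _ (sub_ρ_mem x))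
    rw [ρ_eq hmem] at hxy
    rw [← sub_eq_zero, ← βγ_mul hmem]
    linear_combination γ * hxy
  · refine ⟨ρ z + γ * (z - ρ z), ?_⟩
    have hρ : ρ (ρ z + γ * (z - ρ z)) = ρ z := ρ_eq <| by
      rw [show ρ z + γ * (z - ρ z) - z = (γ - 1) * (z - ρ z) by ring]
      exact I.mul_mem_left _ (sub_ρ_mem z)
    simp only [hρ]
    linear_combination βγ_mul (sub_ρ_mem z)
  · obtain ⟨p, hp⟩ := mem_I.mp (sub_ρ_mem x)
    obtain ⟨q, hq⟩ := mem_I.mp (sub_ρ_mem y)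
    have hρ : ρ (A * x + (1 - A) * y) = ρ x := ρ_eq (mem_I.mpr ⟨y - x, by ring⟩)
    simp only [hρ]
    linear_combination
      (x - y + (A - 1) * (p - q)) * hβ - (1 - B) * (β - 1) * (hp - hq) + β * (p - q) * h

theorem addOrderOf_dvd_addOrderOf_of_dvd {S : Type*} [Semiring S] {u v : S} (h : u ∣ v) :
    addOrderOf v ∣ addOrderOf u := by
  obtain ⟨w, rfl⟩ := h
  exact addOrderOf_dvd_of_nsmul_eq_zero <| by
    rw [← smul_mul_assoc, addOrderOf_nsmul_eq_zero, zero_mul]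

namespace ZMod

variable {n : ℕ}

theorem addOrderOf_intCast [NeZero n] (c : ℤ) : addOrderOf (c : ZMod n) = n / Int.gcd n c := by
  rcases Int.natAbs_eq c with h | h <;> rw [h] <;>
    simp only [Int.cast_neg, addOrderOf_neg, Int.gcd_neg, Int.cast_natCast, Int.gcd_natCast_natCast,
      addOrderOf_coe _ (NeZero.ne n)]

theorem dvd_of_addOrderOf_eq [NeZero n] {u v : ZMod n} (h : addOrderOf u = addOrderOf v) :
    u ∣ v := by
  obtain ⟨a, rfl⟩ : ∃ a : ℕ, (a : ZMod n) = u := ⟨u.val, natCast_zmod_val u⟩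
  obtain ⟨b, rfl⟩ : ∃ b : ℕ, (b : ZMod n) = v := ⟨v.val, natCast_zmod_val v⟩
  have hn := NeZero.ne n
  rw [addOrderOf_coe _ hn, addOrderOf_coe _ hn] at h
  have hgcd : n.gcd a = n.gcd b := by
    rw [← Nat.div_div_self (Nat.gcd_dvd_left n a) hn, h,
      Nat.div_div_self (Nat.gcd_dvd_left n b) hn]
  obtain ⟨k, rfl⟩ : n.gcd a ∣ b := hgcd ▸ Nat.gcd_dvd_right n b
  have bezout := congrArg (Int.cast : ℤ → ZMod n) (Nat.gcd_eq_gcd_ab n a)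
  push_cast [natCast_self] at bezout
  exact ⟨Nat.gcdB n a * k, by push_cast; rw [bezout]; ring⟩

variable {A B : ZMod n} {f : ZMod n → ZMod n}

theorem _root_.IsAlexanderHom.one_sub_mul_apply (hf : IsAlexanderHom A B f) (hB : IsUnit B)
    (h0 : f 0 = 0) (x : ZMod n) : (1 - B) * f x = x * ((1 - B) * f 1) := by
  let φ : ZMod n →+ ZMod n :=
    AddMonoidHom.mk' (fun x => (1 - B) * f x) (hf.one_sub_mul_map_add hB h0)
  simpa [φ] using (φ.toZModLinearMap n).map_smul x 1

theorem _root_.IsAlexanderHom.addOrderOf_one_sub_eq (hf : IsAlexanderHom A B f)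
    (hbij : Function.Bijective f) (hB : IsUnit B) :
    addOrderOf (1 - A) = addOrderOf (1 - B) ∧ (A - B) * (1 - A) = 0 := by
  wlog h0 : f 0 = 0 generalizing f
  · exact this hf.sub_map_zero ((Equiv.subRight (f 0)).bijective.comp hbij) (sub_self _)
  set c := (1 - B) * f 1
  have hlin := hf.one_sub_mul_apply hB h0
  have map_one_sub_mul (y : ZMod n) : f ((1 - A) * y) = y * c := by
    rw [← hlin]; simpa [h0] using hf 0 y
  have map_eq_zero {t : ZMod n} : f t = 0 ↔ t = 0 := hbij.1.eq_iff' h0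
  obtain ⟨x, hx⟩ := hbij.2 1
  have hBc : 1 - B = x * c := by simpa [hx] using hlin x
  have hAc : (A - B) * c = 0 := by
    have hA : f A = B * f 1 := by simpa [h0] using hf 1 0
    linear_combination (hlin A).symm + (1 - B) * hA
  refine ⟨?_, ?_⟩
  · calc addOrderOf (1 - A) = addOrderOf c := addOrderOf_eq_addOrderOf_iff.mpr fun k => by
          rw [nsmul_eq_mul, nsmul_eq_mul, mul_comm, ← map_one_sub_mul, map_eq_zero]
      _ = addOrderOf (1 - B) := Nat.dvd_antisymm
          (addOrderOf_dvd_addOrderOf_of_dvd (Dvd.intro _ rfl))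
          (addOrderOf_dvd_addOrderOf_of_dvd (Dvd.intro_left x hBc.symm))
  · rw [mul_comm, ← map_eq_zero, map_one_sub_mul, hAc]

theorem exists_bijective_isAlexanderHom_iff [NeZero n] (hB : IsUnit B) :
    (∃ f : ZMod n → ZMod n, Function.Bijective f ∧ IsAlexanderHom A B f) ↔
      addOrderOf (1 - A) = addOrderOf (1 - B) ∧ (A - B) * (1 - A) = 0 := by
  refine ⟨fun ⟨f, hbij, hf⟩ => hf.addOrderOf_one_sub_eq hbij hB, fun ⟨hord, hAB⟩ => ?_⟩
  exact exists_bijective_isAlexanderHom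
    (dvd_of_addOrderOf_eq hord) (dvd_of_addOrderOf_eq hord.symm) hAB

end ZMod

theorem linear_alexander_quandles_iso_iff_general
    (n : ℕ) (hn : 1 ≤ n) (a b : ℤ)
    (hb : Int.gcd b n = 1) :
    (∃ f : ZMod n → ZMod n, Function.Bijective f ∧
        ∀ x y : ZMod n,
          f ((a : ZMod n) * x + ((1 - a : ℤ) : ZMod n) * y)
            = (b : ZMod n) * f x + ((1 - b : ℤ) : ZMod n) * f y) ↔
      (n / Int.gcd (n : ℤ) (1 - a) = n / Int.gcd (n : ℤ) (1 - b) ∧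
        a ≡ b [ZMOD ((n / Int.gcd (n : ℤ) (1 - a) : ℕ) : ℤ)]) := by
  have : NeZero n := ⟨by omega⟩
  have hB : IsUnit (b : ZMod n) := isCoprime_zero_right.mp <| by
    simpa using (Int.isCoprime_iff_gcd_eq_one.mpr hb).intCast (R := ZMod n)
  rw [← ZMod.addOrderOf_intCast, ← ZMod.addOrderOf_intCast, Int.modEq_comm, Int.modEq_iff_dvd,
    addOrderOf_dvd_iff_zsmul_eq_zero, zsmul_eq_mul]
  push_cast
  exact ZMod.exists_bijective_isAlexanderHom_iff hB

/-- Let `n ≥ 1` and let `a, b` be integers coprime to `n`.  The linear Alexander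
quandles `Λₙ/(t-a)` and `Λₙ/(t-b)` (namely `ZMod n` with quandle operation
`x ^ y = a*x + (1-a)*y`, resp. with `b`) are isomorphic as quandles iff
`N(n,a) = N(n,b)` and `a ≡ b (mod N(n,a))`, where `N(n,c) = n / gcd(n, 1-c)`. -/
theorem linear_alexander_quandles_iso_iff
    (n : ℕ) (hn : 1 ≤ n) (a b : ℤ)
    (ha : Int.gcd a n = 1) (hb : Int.gcd b n = 1) :
    (∃ f : ZMod n → ZMod n, Function.Bijective f ∧
        ∀ x y : ZMod n,
          f ((a : ZMod n) * x + ((1 - a : ℤ) : ZMod n) * y)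
            = (b : ZMod n) * f x + ((1 - b : ℤ) : ZMod n) * f y) ↔
      (n / Int.gcd (n : ℤ) (1 - a) = n / Int.gcd (n : ℤ) (1 - b) ∧
        a ≡ b [ZMOD ((n / Int.gcd (n : ℤ) (1 - a) : ℕ) : ℤ)]) :=
  linear_alexander_quandles_iso_iff_general n hn a b hb
end

section
/- For any prime p, there are exactly p−1 isomorphism classes of Alexander quandles with p elements; namely, every Alexander quandle with p elements is isomorphic to Λ_p/(t−a) for some a ∈ {1, …, p−1}, and the quandles Λ_p/(t−a) for a = 1, …, p−1 are pairwise non-isomorphic. -/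
/-!
A group of prime order `p` is cyclic, so transporting along `A ≃+ ZMod p` turns any Alexander
quandle of order `p` into `ZMod p` with `t` acting as multiplication by a unit `c`.
Conversely, if `f` is an isomorphism from `Λ_p/(t-a)` to `Λ_p/(t-b)`, then `g = f - f 0` satisfies
`g (a x) = b g x` and `g ((1-a) y) = (1-b) g y`, hence is additive when `a ≠ 0, 1`; over the prime
field an additive map is multiplication by `g 1 ≠ 0`, and `g a = b g 1` forces `a = b`.
-/

theorem ZMod.addMonoidHom_apply_eq_mul {n : ℕ} (g : ZMod n →+ ZMod n) (x : ZMod n) :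
    g x = x * g 1 := by
  obtain ⟨k, rfl⟩ := ZMod.intCast_surjective x
  simpa only [zsmul_eq_mul, mul_one] using g.map_zsmul k 1

theorem AddEquiv.apply_map_eq_mul_of_zmod {A F : Type*} [AddCommGroup A] [FunLike F A A]
    [AddMonoidHomClass F A A] {n : ℕ} (ψ : A ≃+ ZMod n) (φ : F) (x : A) :
    ψ (φ x) = ψ (φ (ψ.symm 1)) * ψ x := by
  rw [mul_comm]
  simpa using ZMod.addMonoidHom_apply_eq_mul
    ((ψ : A →+ ZMod n).comp ((φ : A →+ A).comp (ψ.symm : ZMod n →+ A))) (ψ x)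

theorem nonempty_addEquiv_zmod_of_card_prime {A : Type*} [AddGroup A] {p : ℕ}
    [Fact p.Prime] (hA : Nat.card A = p) : Nonempty (A ≃+ ZMod p) :=
  ⟨hA ▸ (zmodAddCyclicAddEquiv (isAddCyclic_of_prime_card hA)).symm⟩

theorem ZMod.eq_of_injective_of_map_affine {p : ℕ} [Fact p.Prime] {a b : ZMod p}
    {f : ZMod p → ZMod p} (hf : Function.Injective f)
    (hmap : ∀ x y, f (a * x + (1 - a) * y) = b * f x + (1 - b) * f y) : a = b := by
  set g : ZMod p → ZMod p := fun x => f x - f 0 with hg_def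
  have hg (x y : ZMod p) : g (a * x + (1 - a) * y) = b * g x + (1 - b) * g y := by
    simp only [hg_def, hmap]; ring
  have hg0 : g 0 = 0 := sub_self _
  have hg1 : g 1 ≠ 0 := sub_ne_zero.2 (hf.ne one_ne_zero)
  have hga : g a = b * g 1 := by simpa [hg0] using hg 1 0
  rcases eq_or_ne a 0 with rfl | ha0
  · rw [hg0, eq_comm, mul_eq_zero] at hga
    exact (hga.resolve_right hg1).symm
  rcases eq_or_ne a 1 with rfl | ha1
  · have h := hg 0 1
    rw [sub_self, zero_mul, mul_zero, zero_add, hg0, mul_zero, zero_add, eq_comm,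
      mul_eq_zero] at h
    exact sub_eq_zero.1 (h.resolve_right hg1)
  have h1a : 1 - a ≠ 0 := sub_ne_zero.2 ha1.symm
  have hadd (u v : ZMod p) : g (u + v) = g u + g v := by
    have h := hg (a⁻¹ * u) ((1 - a)⁻¹ * v)
    have hu := hg (a⁻¹ * u) 0
    have hv := hg 0 ((1 - a)⁻¹ * v)
    simp only [mul_inv_cancel_left₀ ha0, mul_inv_cancel_left₀ h1a, mul_zero, add_zero,
      zero_add, hg0] at h hu hv
    rw [h, hu, hv]
  have hlin := ZMod.addMonoidHom_apply_eq_mul (AddMonoidHom.mk' g hadd) a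
  simp only [AddMonoidHom.mk'_apply] at hlin
  exact mul_right_cancel₀ hg1 (hlin ▸ hga)

/-- For any prime `p` there are exactly `p - 1` isomorphism classes of Alexander
quandles with `p` elements: every Alexander quandle (an abelian group with a
`ℤ`-automorphism `φ`, quandle operation `x ^ y = φ x + y - φ y`) with `p`
elements is isomorphic to the linear quandle `Λ_p/(t-a)` (i.e. `ZMod p` with
`x ^ y = a*x + (1-a)*y`) for some `a ∈ {1, …, p-1}`, and for distinct
`a, b ∈ {1, …, p-1}` the quandles `Λ_p/(t-a)` and `Λ_p/(t-b)` are not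
isomorphic. -/
theorem alexander_quandles_of_prime_order
    (p : ℕ) (hp : p.Prime) :
    (∀ (A : Type) [AddCommGroup A] (φ : A ≃+ A), Nat.card A = p →
      ∃ a : ℕ, 1 ≤ a ∧ a ≤ p - 1 ∧
        ∃ f : A → ZMod p, Function.Bijective f ∧
          ∀ x y : A,
            f (φ x + y - φ y) = (a : ZMod p) * f x + (1 - (a : ZMod p)) * f y) ∧
    (∀ a b : ℕ, 1 ≤ a → a ≤ p - 1 → 1 ≤ b → b ≤ p - 1 → a ≠ b →
      ¬ ∃ f : ZMod p → ZMod p, Function.Bijective f ∧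
          ∀ x y : ZMod p,
            f ((a : ZMod p) * x + (1 - (a : ZMod p)) * y)
              = (b : ZMod p) * f x + (1 - (b : ZMod p)) * f y) := by
  have : Fact p.Prime := ⟨hp⟩
  constructor
  · intro A _ φ hA
    obtain ⟨ψ⟩ := nonempty_addEquiv_zmod_of_card_prime hA
    set c := ψ (φ (ψ.symm 1))
    have hc : c ≠ 0 := by simp [c]
    refine ⟨c.val, Nat.one_le_iff_ne_zero.2 ((ZMod.val_ne_zero c).2 hc),
      Nat.le_pred_of_lt (ZMod.val_lt c), ψ, ψ.bijective, fun x y => ?_⟩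
    rw [ZMod.natCast_zmod_val, map_sub, map_add, ψ.apply_map_eq_mul_of_zmod φ x,
      ψ.apply_map_eq_mul_of_zmod φ y]
    ring
  · rintro a b - ha - hb hab ⟨f, hf, hquandle⟩
    refine hab ?_
    have hcast := (ZMod.natCast_eq_natCast_iff' a b p).1
      (ZMod.eq_of_injective_of_map_affine hf.injective hquandle)
    rwa [Nat.mod_eq_of_lt (by omega), Nat.mod_eq_of_lt (by omega)] at hcast
end
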